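/- Let V be a finite set of nodes partitioned by a binary sensitive attribute s : V → {0,1} into nonempty groups S₀ and S₁, with input features x_j ∈ ℝ^F. Let each node k have a nonempty neighborhood N(k) ⊆ V and attention coefficients α_{kj} ≥ 0 for j ∈ N(k) with Σ_{j∈N(k)} α_{kj} = 1. Consider a network consisting of a single GAT layer followed by a fully connected layer: c_j = W⁰ x_j ∈ ℝ^{F₁}, z¹_k = Σ_{j∈N(k)} α_{kj} c_j, h¹_k = σ(z¹_k), then z²_k = W¹ h¹_k ∈ ℝ^{F₂} and ŷ_k = σ(z²_k), where σ : ℝ → ℝ is L-Lipschitz and applied entrywise. Let S^χ be the set of nodes having at least one neighbor of the opposite sensitive group, R_s^χ = |S_s ∩ S^χ|/|S_s|. Assume ‖c_j − c̄_{s(j)}‖_∞ ≤ Δc and ‖z¹_j − z̄¹_{s(j)}‖_∞ ≤ Δz¹ and ‖z²_j − z̄²_{s(j)}‖_∞ ≤ Δz² for all j ∈ V (group means taken within each sensitive group), and assume there exists α^χ ∈ [0,1] such that for every k ∈ S^χ, Σ_{j∈N(k), s(j)≠s(k)} α_{kj} = α^χ. Then the output disparity δ_ŷ = ‖mean_{S₀}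 ŷ − mean_{S₁} ŷ‖₂ satisfies δ_ŷ ≤ L ( σmax(W¹) · L ( σmax(W⁰) · |(R₁^χ + R₀^χ) α^χ − 1| · δ_x + 2√(F₁) Δc + 2√(F₁) Δz¹ ) + 2√(F₂) Δz² ), where δ_x = ‖mean_{S₀} x − mean_{S₁} x‖₂. -/

import Mathlib

open Finset

/-- Group mean of vectors over a finite index set. -/
noncomputable def gmean {V : Type*} {d : ℕ} (S : Finset V)
    (x : V → EuclideanSpace ℝ (Fin d)) : EuclideanSpace ℝ (Fin d) :=
  (S.card : ℝ)⁻¹ • ∑ j ∈ S, x j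

/-- The sensitive group of nodes with sensitive attribute `t`. -/
def grp {V : Type*} [Fintype V] (s : V → Fin 2) (t : Fin 2) : Finset V :=
  Finset.univ.filter fun j => s j = t

open scoped BigOperators

/-! Each layer moves the difference of the two group means by a controlled amount. A linear map
scales it by at most its operator norm. An entrywise `L`-Lipschitz activation scales it by at most
`L`, up to the cost of exchanging `σ` with a group mean, which is at most `L Δ` per coordinate.
The GAT layer sends a node `k` of group `t` to a convex combination of the `c_j`; replacing every
`c_j` by its group mean (error `Δc` per coordinate) turns it into `(1 - a_k) c̄_t + a_k c̄_t'`,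
where `a_k` is the attention `k` pays to the other group, equal to `αχ` on `Sχ` and to `0` off it.
Averaging over group `t` gives `c̄_t + R_t αχ (c̄_t' - c̄_t)`, so the difference of group means is
multiplied by `1 - (R₀ + R₁) αχ`. Coordinatewise errors `e` become Euclidean errors `√d e`. -/

lemma gmean_apply {V : Type*} {d : ℕ} (S : Finset V) (x : V → EuclideanSpace ℝ (Fin d))
    (i : Fin d) : gmean S x i = 𝔼 j ∈ S, x j i := by
  simp [gmean, expect_eq_sum_div_card, div_eq_inv_mul]

lemma map_gmean {V : Type*} {d e : ℕ}
    (W : EuclideanSpace ℝ (Fin d) →L[ℝ] EuclideanSpace ℝ (Fin e)) (S : Finset V)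
    (x : V → EuclideanSpace ℝ (Fin d)) :
    W (gmean S x) = gmean S fun j => W (x j) := by
  simp [gmean, map_sum]

lemma EuclideanSpace.norm_le_sqrt_mul_of_forall_abs_le {d : ℕ} {w : EuclideanSpace ℝ (Fin d)}
    {Δ : ℝ} (h : ∀ i, |w i| ≤ Δ) : ‖w‖ ≤ √d * Δ := by
  rcases d.eq_zero_or_pos with rfl | hd
  · simp [EuclideanSpace.norm_eq]
  have hΔ : 0 ≤ Δ := (abs_nonneg _).trans (h ⟨0, hd⟩)
  have hsq : ∑ i, ‖w i‖ ^ 2 ≤ d * Δ ^ 2 := by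
    simpa using sum_le_card_nsmul univ (fun i => ‖w i‖ ^ 2) (Δ ^ 2)
      fun i _ => pow_le_pow_left₀ (norm_nonneg _) (h i) 2
  rw [EuclideanSpace.norm_eq, ← Real.sqrt_sq hΔ, ← Real.sqrt_mul (Nat.cast_nonneg d)]
  exact Real.sqrt_le_sqrt hsq

lemma abs_expect_sub_expect_le {ι : Type*} {S : Finset ι} (hS : S.Nonempty) {f g : ι → ℝ}
    {Δ : ℝ} (h : ∀ j ∈ S, |f j - g j| ≤ Δ) : |𝔼 j ∈ S, f j - 𝔼 j ∈ S, g j| ≤ Δ := by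
  rw [← expect_sub_distrib]
  exact (abs_expect_le S _).trans (expect_le hS h)

lemma abs_sum_mul_le_of_sum_eq_one {ι : Type*} {S : Finset ι} {a e : ι → ℝ}
    (ha : ∀ j ∈ S, 0 ≤ a j) (hsum : ∑ j ∈ S, a j = 1) {Δ : ℝ} (h : ∀ j ∈ S, |e j| ≤ Δ) :
    |∑ j ∈ S, a j * e j| ≤ Δ :=
  calc |∑ j ∈ S, a j * e j| ≤ ∑ j ∈ S, a j * |e j| := by
        refine (abs_sum_le_sum_abs _ _).trans (sum_le_sum fun j hj => ?_)
        rw [abs_mul, abs_of_nonneg (ha j hj)]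
    _ ≤ ∑ j ∈ S, a j * Δ := sum_le_sum fun j hj => mul_le_mul_of_nonneg_left (h j hj) (ha j hj)
    _ = Δ := by rw [← sum_mul, hsum, one_mul]

lemma nonneg_of_forall_abs_sub_le_mul {σ : ℝ → ℝ} {L : ℝ}
    (hσ : ∀ a b, |σ a - σ b| ≤ L * |a - b|) : 0 ≤ L := by
  simpa using (abs_nonneg _).trans (hσ 0 1)

noncomputable def entrywise {d : ℕ} (σ : ℝ → ℝ) (u : EuclideanSpace ℝ (Fin d)) :
    EuclideanSpace ℝ (Fin d) :=
  WithLp.toLp 2 fun i => σ (u i)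

@[simp]
lemma entrywise_apply {d : ℕ} (σ : ℝ → ℝ) (u : EuclideanSpace ℝ (Fin d)) (i : Fin d) :
    entrywise σ u i = σ (u i) := rfl

lemma norm_entrywise_sub_le {d : ℕ} {σ : ℝ → ℝ} {L : ℝ}
    (hσ : ∀ a b, |σ a - σ b| ≤ L * |a - b|) (u v : EuclideanSpace ℝ (Fin d)) :
    ‖entrywise σ u - entrywise σ v‖ ≤ L * ‖u - v‖ := by
  have hL := nonneg_of_forall_abs_sub_le_mul hσ
  have hsq : ∑ i, ‖(entrywise σ u - entrywise σ v) i‖ ^ 2 ≤ ∑ i, (L * ‖(u - v) i‖) ^ 2 :=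
    sum_le_sum fun i _ => pow_le_pow_left₀ (norm_nonneg _) (by simpa using hσ (u i) (v i)) 2
  rw [EuclideanSpace.norm_eq, EuclideanSpace.norm_eq, ← Real.sqrt_sq hL,
    ← Real.sqrt_mul (sq_nonneg L), mul_sum]
  simpa only [mul_pow] using Real.sqrt_le_sqrt hsq

lemma norm_gmean_entrywise_sub_entrywise_gmean_le {V : Type*} {d : ℕ} {S : Finset V}
    (hS : S.Nonempty) {σ : ℝ → ℝ} {L : ℝ} (hσ : ∀ a b, |σ a - σ b| ≤ L * |a - b|)
    {z : V → EuclideanSpace ℝ (Fin d)} {Δ : ℝ} (hz : ∀ j ∈ S, ∀ i, |z j i - gmean S z i| ≤ Δ) :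
    ‖gmean S (fun j => entrywise σ (z j)) - entrywise σ (gmean S z)‖ ≤ √d * (L * Δ) := by
  have hL := nonneg_of_forall_abs_sub_le_mul hσ
  refine EuclideanSpace.norm_le_sqrt_mul_of_forall_abs_le fun i => ?_
  rw [PiLp.sub_apply, entrywise_apply, gmean_apply, ← expect_const hS (σ (gmean S z i))]
  refine abs_expect_sub_expect_le hS fun j hj => ?_
  exact (hσ _ _).trans (mul_le_mul_of_nonneg_left (hz j hj i) hL)

lemma norm_gmean_entrywise_sub_le {V : Type*} {d : ℕ} {S T : Finset V}
    (hS : S.Nonempty) (hT : T.Nonempty) {σ : ℝ → ℝ} {L : ℝ}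
    (hσ : ∀ a b, |σ a - σ b| ≤ L * |a - b|) {z : V → EuclideanSpace ℝ (Fin d)} {Δ : ℝ}
    (hzS : ∀ j ∈ S, ∀ i, |z j i - gmean S z i| ≤ Δ)
    (hzT : ∀ j ∈ T, ∀ i, |z j i - gmean T z i| ≤ Δ) :
    ‖gmean S (fun j => entrywise σ (z j)) - gmean T (fun j => entrywise σ (z j))‖ ≤
      L * (‖gmean S z - gmean T z‖ + 2 * √d * Δ) := by
  set φ := fun j => entrywise σ (z j)
  calc ‖gmean S φ - gmean T φ‖
      = ‖(gmean S φ - entrywise σ (gmean S z))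
          + (entrywise σ (gmean S z) - entrywise σ (gmean T z))
          - (gmean T φ - entrywise σ (gmean T z))‖ := by congr 1; abel
    _ ≤ ‖gmean S φ - entrywise σ (gmean S z)‖
          + ‖entrywise σ (gmean S z) - entrywise σ (gmean T z)‖
          + ‖gmean T φ - entrywise σ (gmean T z)‖ := norm_sub_le_of_le (norm_add_le _ _) le_rfl
    _ ≤ √d * (L * Δ) + L * ‖gmean S z - gmean T z‖ + √d * (L * Δ) := by
        gcongr
        · exact norm_gmean_entrywise_sub_entrywise_gmean_le hS hσ hzS
        · exact norm_entrywise_sub_le hσ _ _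
        · exact norm_gmean_entrywise_sub_entrywise_gmean_le hT hσ hzT
    _ = L * (‖gmean S z - gmean T z‖ + 2 * √d * Δ) := by ring

lemma norm_gmean_map_sub_le {V : Type*} {d e : ℕ}
    (W : EuclideanSpace ℝ (Fin d) →L[ℝ] EuclideanSpace ℝ (Fin e)) (S T : Finset V)
    (h : V → EuclideanSpace ℝ (Fin d)) :
    ‖gmean S (fun j => W (h j)) - gmean T (fun j => W (h j))‖ ≤
      ‖W‖ * ‖gmean S h - gmean T h‖ := by
  rw [← map_gmean, ← map_gmean, ← map_sub]
  exact W.le_opNorm _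

lemma mem_grp {V : Type*} [Fintype V] {s : V → Fin 2} {t : Fin 2} {k : V} :
    k ∈ grp s t ↔ s k = t := by
  simp [grp]

def crossAttention {V : Type*} (s : V → Fin 2) (N : V → Finset V) (α : V → V → ℝ) (k : V) : ℝ :=
  ∑ j ∈ (N k).filter (fun j => s j ≠ s k), α k j

/-- The paper's `R_t^χ`. -/
noncomputable def crossRatio {V : Type*} [Fintype V] [DecidableEq V] (s : V → Fin 2)
    (Sχ : Finset V) (t : Fin 2) : ℝ :=
  ((grp s t ∩ Sχ).card : ℝ) / ((grp s t).card : ℝ)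

section Aggregation

variable {V : Type*} {s : V → Fin 2} {N : V → Finset V} {α : V → V → ℝ}

lemma sum_mul_eq_mixture {t t' : Fin 2} (htt' : t ≠ t') {k : V} (hk : s k = t)
    (hα : ∑ j ∈ N k, α k j = 1) (μ : Fin 2 → ℝ) :
    ∑ j ∈ N k, α k j * μ (s j) =
      (1 - crossAttention s N α k) * μ t + crossAttention s N α k * μ t' := by
  have hsplit := sum_filter_add_sum_filter_not (N k) (fun j => s j ≠ s k) (α k)
  rw [hα] at hsplit
  rw [← sum_filter_add_sum_filter_not (N k) (fun j => s j ≠ s k), crossAttention,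
    ← eq_sub_of_add_eq' hsplit, sum_mul, sum_mul, add_comm]
  congr 1 <;> refine sum_congr rfl fun j hj => ?_
  · rw [not_not.mp (mem_filter.mp hj).2, hk]
  · have : s j = t' := by have := (mem_filter.mp hj).2; omega
    rw [this]

lemma abs_sum_mul_sub_mixture_le {t t' : Fin 2} (htt' : t ≠ t') {k : V} (hk : s k = t)
    (hαnn : ∀ j ∈ N k, 0 ≤ α k j) (hα : ∑ j ∈ N k, α k j = 1) {f : V → ℝ} {μ : Fin 2 → ℝ}
    {Δ : ℝ} (hf : ∀ j, |f j - μ (s j)| ≤ Δ) :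
    |∑ j ∈ N k, α k j * f j -
        ((1 - crossAttention s N α k) * μ t + crossAttention s N α k * μ t')| ≤ Δ := by
  rw [← sum_mul_eq_mixture htt' hk hα, ← sum_sub_distrib]
  simp_rw [← mul_sub]
  exact abs_sum_mul_le_of_sum_eq_one hαnn hα fun j _ => hf j

variable [Fintype V] [DecidableEq V] {Sχ : Finset V} {αχ : ℝ}

lemma expect_crossAttention (hSχ : ∀ k, k ∈ Sχ ↔ ∃ j ∈ N k, s j ≠ s k)
    (hαχ : ∀ k ∈ Sχ, crossAttention s N α k = αχ) (t : Fin 2) :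
    𝔼 k ∈ grp s t, crossAttention s N α k = crossRatio s Sχ t * αχ := by
  have hite : ∀ k, crossAttention s N α k = if k ∈ Sχ then αχ else 0 := by
    intro k
    split_ifs with hk
    · exact hαχ k hk
    · refine sum_eq_zero fun j hj => absurd ((hSχ k).2 ?_) hk
      exact ⟨j, (mem_filter.mp hj).1, (mem_filter.mp hj).2⟩
  simp_rw [hite]
  rw [expect_eq_sum_div_card, sum_ite_mem, sum_const, nsmul_eq_mul, crossRatio]
  ring

lemma abs_expect_aggregate_sub_le {t t' : Fin 2} (htt' : t ≠ t') (hS : (grp s t).Nonempty)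
    (hαnn : ∀ k, ∀ j ∈ N k, 0 ≤ α k j) (hαsum : ∀ k, ∑ j ∈ N k, α k j = 1)
    (hSχ : ∀ k, k ∈ Sχ ↔ ∃ j ∈ N k, s j ≠ s k)
    (hαχ : ∀ k ∈ Sχ, crossAttention s N α k = αχ) {f : V → ℝ} {μ : Fin 2 → ℝ} {Δ : ℝ}
    (hf : ∀ j, |f j - μ (s j)| ≤ Δ) :
    |𝔼 k ∈ grp s t, ∑ j ∈ N k, α k j * f j
        - (μ t + crossRatio s Sχ t * αχ * (μ t' - μ t))| ≤ Δ := by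
  have hmix : 𝔼 k ∈ grp s t, ((1 - crossAttention s N α k) * μ t + crossAttention s N α k * μ t')
      = μ t + crossRatio s Sχ t * αχ * (μ t' - μ t) := by
    simp_rw [show ∀ a : ℝ, (1 - a) * μ t + a * μ t' = μ t + a * (μ t' - μ t) by intro a; ring]
    rw [expect_add_distrib, expect_const hS, ← expect_mul, expect_crossAttention hSχ hαχ]
  rw [← hmix]
  exact abs_expect_sub_expect_le hS fun k hk =>
    abs_sum_mul_sub_mixture_le htt' (mem_grp.mp hk) (hαnn k) (hαsum k) hf

lemma norm_gmean_aggregate_sub_le {d : ℕ} {t t' : Fin 2} (htt' : t ≠ t')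
    (hS : (grp s t).Nonempty) (hS' : (grp s t').Nonempty)
    (hαnn : ∀ k, ∀ j ∈ N k, 0 ≤ α k j) (hαsum : ∀ k, ∑ j ∈ N k, α k j = 1)
    (hSχ : ∀ k, k ∈ Sχ ↔ ∃ j ∈ N k, s j ≠ s k)
    (hαχ : ∀ k ∈ Sχ, crossAttention s N α k = αχ) {c : V → EuclideanSpace ℝ (Fin d)} {Δ : ℝ}
    (hc : ∀ j i, |c j i - gmean (grp s (s j)) c i| ≤ Δ) :
    ‖gmean (grp s t) (fun k => ∑ j ∈ N k, α k j • c j)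
        - gmean (grp s t') (fun k => ∑ j ∈ N k, α k j • c j)‖ ≤
      |(crossRatio s Sχ t' + crossRatio s Sχ t) * αχ - 1|
          * ‖gmean (grp s t) c - gmean (grp s t') c‖ + 2 * √d * Δ := by
  set z := fun k => ∑ j ∈ N k, α k j • c j
  set κ := 1 - (crossRatio s Sχ t' + crossRatio s Sχ t) * αχ
  have herr : ‖(gmean (grp s t) z - gmean (grp s t') z)
      - κ • (gmean (grp s t) c - gmean (grp s t') c)‖ ≤ √d * (2 * Δ) := by
    refine EuclideanSpace.norm_le_sqrt_mul_of_forall_abs_le fun i => ?_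
    have ht := abs_expect_aggregate_sub_le htt' hS hαnn hαsum hSχ hαχ
      (f := fun j => c j i) (μ := fun u => gmean (grp s u) c i) (fun j => hc j i)
    have ht' := abs_expect_aggregate_sub_le htt'.symm hS' hαnn hαsum hSχ hαχ
      (f := fun j => c j i) (μ := fun u => gmean (grp s u) c i) (fun j => hc j i)
    simp only [z, PiLp.sub_apply, PiLp.smul_apply, smul_eq_mul, gmean_apply,
      WithLp.ofLp_sum, Finset.sum_apply] at ht ht' ⊢
    rw [abs_le] at ht ht' ⊢
    constructor <;> linarith [ht.1, ht.2, ht'.1, ht'.2]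
  calc ‖gmean (grp s t) z - gmean (grp s t') z‖
      ≤ ‖κ • (gmean (grp s t) c - gmean (grp s t') c)‖ + √d * (2 * Δ) :=
        (norm_le_norm_add_norm_sub' _ _).trans (by gcongr)
    _ = |(crossRatio s Sχ t' + crossRatio s Sχ t) * αχ - 1|
          * ‖gmean (grp s t) c - gmean (grp s t') c‖ + 2 * √d * Δ := by
        rw [norm_smul, Real.norm_eq_abs, abs_sub_comm]
        ring

end Aggregation

theorem composed_network_disparity_bound_general
    {V : Type*} [Fintype V] [DecidableEq V] {F F₁ F₂ : ℕ}
    (s : V → Fin 2)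
    (hS₀ : (grp s 0).Nonempty) (hS₁ : (grp s 1).Nonempty)
    (x : V → EuclideanSpace ℝ (Fin F))
    (N : V → Finset V)
    (α : V → V → ℝ) (hαnn : ∀ k, ∀ j ∈ N k, 0 ≤ α k j)
    (hαsum : ∀ k, ∑ j ∈ N k, α k j = 1)
    (W₀ : EuclideanSpace ℝ (Fin F) →L[ℝ] EuclideanSpace ℝ (Fin F₁))
    (W₁ : EuclideanSpace ℝ (Fin F₁) →L[ℝ] EuclideanSpace ℝ (Fin F₂))
    (σ : ℝ → ℝ) (L : ℝ) (hσ : ∀ a b, |σ a - σ b| ≤ L * |a - b|)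
    (c : V → EuclideanSpace ℝ (Fin F₁)) (hc : ∀ j, c j = W₀ (x j))
    (z₁ : V → EuclideanSpace ℝ (Fin F₁)) (hz₁ : ∀ k, z₁ k = ∑ j ∈ N k, α k j • c j)
    (h₁ : V → EuclideanSpace ℝ (Fin F₁)) (hh₁ : ∀ k i, h₁ k i = σ (z₁ k i))
    (z₂ : V → EuclideanSpace ℝ (Fin F₂)) (hz₂ : ∀ k, z₂ k = W₁ (h₁ k))
    (yhat : V → EuclideanSpace ℝ (Fin F₂)) (hyhat : ∀ k i, yhat k i = σ (z₂ k i))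
    (Δc Δz₁ Δz₂ : ℝ)
    (hΔc : ∀ j, ∀ i, |c j i - gmean (grp s (s j)) c i| ≤ Δc)
    (hΔz₁ : ∀ j, ∀ i, |z₁ j i - gmean (grp s (s j)) z₁ i| ≤ Δz₁)
    (hΔz₂ : ∀ j, ∀ i, |z₂ j i - gmean (grp s (s j)) z₂ i| ≤ Δz₂)
    (Sχ : Finset V) (hSχ : ∀ k, k ∈ Sχ ↔ ∃ j ∈ N k, s j ≠ s k)
    (αχ : ℝ)
    (hA2 : ∀ k ∈ Sχ, ∑ j ∈ (N k).filter (fun j => s j ≠ s k), α k j = αχ) :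
    ‖gmean (grp s 0) yhat - gmean (grp s 1) yhat‖ ≤
      L * (‖W₁‖ *
            (L * (‖W₀‖ *
                |(((grp s 1 ∩ Sχ).card : ℝ) / ((grp s 1).card : ℝ)
                    + ((grp s 0 ∩ Sχ).card : ℝ) / ((grp s 0).card : ℝ)) * αχ - 1|
                * ‖gmean (grp s 0) x - gmean (grp s 1) x‖
              + 2 * Real.sqrt F₁ * Δc + 2 * Real.sqrt F₁ * Δz₁))
          + 2 * Real.sqrt F₂ * Δz₂) := by
  have hL := nonneg_of_forall_abs_sub_le_mul hσ
  have within_group {d : ℕ} {z : V → EuclideanSpace ℝ (Fin d)} {Δ : ℝ}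
      (hz : ∀ j i, |z j i - gmean (grp s (s j)) z i| ≤ Δ) (t : Fin 2) :
      ∀ j ∈ grp s t, ∀ i, |z j i - gmean (grp s t) z i| ≤ Δ :=
    fun j hj => mem_grp.mp hj ▸ hz j
  have hx : ‖gmean (grp s 0) c - gmean (grp s 1) c‖ ≤
      ‖W₀‖ * ‖gmean (grp s 0) x - gmean (grp s 1) x‖ :=
    funext hc ▸ norm_gmean_map_sub_le W₀ (grp s 0) (grp s 1) x
  have hgat :=
    funext hz₁ ▸ norm_gmean_aggregate_sub_le zero_ne_one hS₀ hS₁ hαnn hαsum hSχ hA2 hΔc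
  have hact₁ : ‖gmean (grp s 0) h₁ - gmean (grp s 1) h₁‖ ≤
      L * (‖gmean (grp s 0) z₁ - gmean (grp s 1) z₁‖ + 2 * √F₁ * Δz₁) := by
    rw [show h₁ = fun k => entrywise σ (z₁ k) from funext fun k => PiLp.ext (hh₁ k)]
    exact norm_gmean_entrywise_sub_le hS₀ hS₁ hσ (within_group hΔz₁ 0) (within_group hΔz₁ 1)
  have hlin : ‖gmean (grp s 0) z₂ - gmean (grp s 1) z₂‖ ≤
      ‖W₁‖ * ‖gmean (grp s 0) h₁ - gmean (grp s 1) h₁‖ :=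
    funext hz₂ ▸ norm_gmean_map_sub_le W₁ (grp s 0) (grp s 1) h₁
  have hact₂ : ‖gmean (grp s 0) yhat - gmean (grp s 1) yhat‖ ≤
      L * (‖gmean (grp s 0) z₂ - gmean (grp s 1) z₂‖ + 2 * √F₂ * Δz₂) := by
    rw [show yhat = fun k => entrywise σ (z₂ k) from funext fun k => PiLp.ext (hyhat k)]
    exact norm_gmean_entrywise_sub_le hS₀ hS₁ hσ (within_group hΔz₂ 0) (within_group hΔz₂ 1)
  calc ‖gmean (grp s 0) yhat - gmean (grp s 1) yhat‖
      ≤ L * (‖W₁‖ * (L * ((|(crossRatio s Sχ 1 + crossRatio s Sχ 0) * αχ - 1| *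
          (‖W₀‖ * ‖gmean (grp s 0) x - gmean (grp s 1) x‖) + 2 * √F₁ * Δc) + 2 * √F₁ * Δz₁))
          + 2 * √F₂ * Δz₂) := by
        refine hact₂.trans ?_
        gcongr
        refine hlin.trans ?_
        gcongr
        refine hact₁.trans ?_
        gcongr
        exact hgat.trans (by gcongr)
    _ = _ := by
        rw [crossRatio, crossRatio]
        ring

/-- The composed bound of the Remark in Subsection 4.1 (equations (5)–(6)): for a network
consisting of a single GAT layer (weights `W₀`, attention `α`, activation `σ`) followed by a
fully connected layer (weights `W₁`, activation `σ`), the output disparity `δ_ŷ` is bounded by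
chaining Theorem 1 with Lemma 1. The linear maps `W₀`, `W₁` between Euclidean spaces play the
roles of the weight matrices and their operator norms are the largest singular values. -/
theorem composed_network_disparity_bound
    {V : Type*} [Fintype V] [DecidableEq V] {F F₁ F₂ : ℕ}
    (s : V → Fin 2)
    (hS₀ : (grp s 0).Nonempty) (hS₁ : (grp s 1).Nonempty)
    (x : V → EuclideanSpace ℝ (Fin F))
    (N : V → Finset V) (hN : ∀ k, (N k).Nonempty)
    (α : V → V → ℝ) (hαnn : ∀ k, ∀ j ∈ N k, 0 ≤ α k j)
    (hαsum : ∀ k, ∑ j ∈ N k, α k j = 1)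
    (W₀ : EuclideanSpace ℝ (Fin F) →L[ℝ] EuclideanSpace ℝ (Fin F₁))
    (W₁ : EuclideanSpace ℝ (Fin F₁) →L[ℝ] EuclideanSpace ℝ (Fin F₂))
    (σ : ℝ → ℝ) (L : ℝ) (hσ : ∀ a b, |σ a - σ b| ≤ L * |a - b|)
    (c : V → EuclideanSpace ℝ (Fin F₁)) (hc : ∀ j, c j = W₀ (x j))
    (z₁ : V → EuclideanSpace ℝ (Fin F₁)) (hz₁ : ∀ k, z₁ k = ∑ j ∈ N k, α k j • c j)
    (h₁ : V → EuclideanSpace ℝ (Fin F₁)) (hh₁ : ∀ k i, h₁ k i = σ (z₁ k i))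
    (z₂ : V → EuclideanSpace ℝ (Fin F₂)) (hz₂ : ∀ k, z₂ k = W₁ (h₁ k))
    (yhat : V → EuclideanSpace ℝ (Fin F₂)) (hyhat : ∀ k i, yhat k i = σ (z₂ k i))
    (Δc Δz₁ Δz₂ : ℝ)
    (hΔc : ∀ j, ∀ i, |c j i - gmean (grp s (s j)) c i| ≤ Δc)
    (hΔz₁ : ∀ j, ∀ i, |z₁ j i - gmean (grp s (s j)) z₁ i| ≤ Δz₁)
    (hΔz₂ : ∀ j, ∀ i, |z₂ j i - gmean (grp s (s j)) z₂ i| ≤ Δz₂)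
    (Sχ : Finset V) (hSχ : ∀ k, k ∈ Sχ ↔ ∃ j ∈ N k, s j ≠ s k)
    (αχ : ℝ) (hαχ0 : 0 ≤ αχ) (hαχ1 : αχ ≤ 1)
    (hA2 : ∀ k ∈ Sχ, ∑ j ∈ (N k).filter (fun j => s j ≠ s k), α k j = αχ) :
    ‖gmean (grp s 0) yhat - gmean (grp s 1) yhat‖ ≤
      L * (‖W₁‖ *
            (L * (‖W₀‖ *
                |(((grp s 1 ∩ Sχ).card : ℝ) / ((grp s 1).card : ℝ)
                    + ((grp s 0 ∩ Sχ).card : ℝ) / ((grp s 0).card : ℝ)) * αχ - 1|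
                * ‖gmean (grp s 0) x - gmean (grp s 1) x‖
              + 2 * Real.sqrt F₁ * Δc + 2 * Real.sqrt F₁ * Δz₁))
          + 2 * Real.sqrt F₂ * Δz₂) :=
  composed_network_disparity_bound_general s hS₀ hS₁ x N α hαnn hαsum W₀ W₁ σ L hσ c hc z₁ hz₁ h₁
    hh₁ z₂ hz₂ yhat hyhat Δc Δz₁ Δz₂ hΔc hΔz₁ hΔz₂ Sχ hSχ αχ hA2
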